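/- Suppose x ∈ (0,1/2) is nonsingular. Then there exists an open interval J containing x such that for every y ∈ J, p(y) = (Λ/q)·|S₋(x)·e(2NΛy) − S₊(x)|². -/

import Mathlib

noncomputable def e (x : ℝ) : ℂ := Complex.exp (2 * Real.pi * Complex.I * x)

noncomputable def G (a k : ℤ) (q : ℕ) : ℂ :=
  ∑ ℓ ∈ Finset.range q, e (((a * ℓ ^ 2 + k * ℓ : ℤ) : ℝ) / q)

noncomputable def invMod (a : ℤ) (q : ℕ) : ℕ := ZMod.val ((a : ZMod q)⁻¹)

noncomputable def cc (a : ℤ) (q : ℕ) (k : ℤ) : ℂ :=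
  if Odd q then e ((invMod (4 * a) q : ℝ) * (k : ℝ) ^ 2 / q)
  else if Even (k + (q : ℤ) / 2) then
    (Real.sqrt 2 : ℂ) * e ((invMod a q : ℝ) * (k : ℝ) ^ 2 / (4 * q))
  else 0

noncomputable def Iset (Λ : ℝ) (q : ℕ) (x : ℝ) : Finset ℤ :=
  Finset.Icc ⌈x * q - q / (2 * Λ)⌉ ⌊x * q + q / (2 * Λ)⌋

noncomputable def pden (N q : ℕ) (Λ : ℝ) (a : ℤ) (x : ℝ) : ℝ :=
  (4 * Λ / q) * (Norm.norm (∑ k ∈ Iset Λ q x,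
    cc a q k * (Real.sin (2 * Real.pi * N * Λ * (x - k / q)) : ℂ))) ^ 2

noncomputable def Splus (N q : ℕ) (Λ : ℝ) (a : ℤ) (x : ℝ) : ℂ :=
  ∑ k ∈ Iset Λ q x, cc a q k * e (N * Λ * k / q)

noncomputable def Sminus (N q : ℕ) (Λ : ℝ) (a : ℤ) (x : ℝ) : ℂ :=
  ∑ k ∈ Iset Λ q x, cc a q k * e (-(N * Λ * k / q))

def Nonsingular (Λ : ℝ) (q : ℕ) (x : ℝ) : Prop :=
  (Odd q → ∀ n : ℤ, x * q - q / (2 * Λ) ≠ n ∧ x * q + q / (2 * Λ) ≠ n) ∧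
  (Even q → ∀ n : ℤ, Even n →
    x * q - q / (2 * Λ) + q / 2 ≠ n ∧ x * q + q / (2 * Λ) + q / 2 ≠ n)

noncomputable def Dnear (x : ℝ) : ℝ := |x - round x|


/-!
Writing `sin θ = (e(θ/2π) - e(-θ/2π)) / 2i` turns the sum defining `p(y)` into
`e(-NΛy) (S₋(y) e(2NΛy) - S₊(y)) / 2i` for every `y`, so only `S₊(y) = S₊(x)` and
`S₋(y) = S₋(x)` for `y` near `x` remain to be shown. The integer range `I(y) ∩ ℤ` can only change,
as `y` moves away from `x`, by integers that are endpoints of `I(x)`, and nonsingularity of `x`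
says exactly that `c_{a/q}` vanishes at such integers.
-/

open Filter Topology Finset

lemma e_add (s t : ℝ) : e (s + t) = e s * e t := by
  simp only [e, ← Complex.exp_add]
  push_cast
  ring_nf

lemma norm_e (t : ℝ) : ‖e t‖ = 1 := by
  rw [e, show 2 * (Real.pi : ℂ) * Complex.I * t = (2 * Real.pi * t : ℝ) * Complex.I by
    push_cast; ring]
  exact Complex.norm_exp_ofReal_mul_I _

lemma ofReal_sin_two_pi_mul (t : ℝ) :
    (Real.sin (2 * Real.pi * t) : ℂ) = (e t - e (-t)) / (2 * Complex.I) := by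
  rw [Complex.ofReal_sin, Complex.sin, e, e, eq_div_iff (by simp)]
  push_cast
  ring_nf
  rw [Complex.I_sq]
  ring

section IccSums

variable {M : Type*} [AddCommMonoid M] {g : ℤ → M}

lemma sum_Icc_floor_add_one_left {a : ℝ} (hg : ∀ k : ℤ, (k : ℝ) = a → g k = 0) (u : ℤ) :
    ∑ k ∈ Icc (⌊a⌋ + 1) u, g k = ∑ k ∈ Icc ⌈a⌉ u, g k := by
  by_cases ha : a ∈ Set.range Int.cast
  · obtain ⟨n, rfl⟩ := ha
    rw [Int.floor_intCast, Int.ceil_intCast, Icc_add_one_left_eq_Ioc, ← Icc_erase_left,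
      sum_erase _ (hg n rfl)]
  · rw [(Int.ceil_eq_floor_add_one_iff_notMem a).2 ha]

lemma sum_Icc_ceil_sub_one_right {b : ℝ} (hg : ∀ k : ℤ, (k : ℝ) = b → g k = 0) (c : ℤ) :
    ∑ k ∈ Icc c (⌈b⌉ - 1), g k = ∑ k ∈ Icc c ⌊b⌋, g k := by
  by_cases hb : b ∈ Set.range Int.cast
  · obtain ⟨n, rfl⟩ := hb
    rw [Int.floor_intCast, Int.ceil_intCast, Icc_sub_one_right_eq_Ico, ← Icc_erase_right,
      sum_erase _ (hg n rfl)]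
  · rw [(Int.ceil_eq_floor_add_one_iff_notMem b).2 hb, add_sub_cancel_right]

lemma eventually_sum_Icc_ceil_left {a : ℝ} (hg : ∀ k : ℤ, (k : ℝ) = a → g k = 0) :
    ∀ᶠ s in 𝓝 a, ∀ u : ℤ, ∑ k ∈ Icc ⌈s⌉ u, g k = ∑ k ∈ Icc ⌈a⌉ u, g k := by
  rw [← nhdsLE_sup_nhdsGT, eventually_sup]
  constructor
  · filter_upwards [tendsto_pure.1 (tendsto_ceil_left_pure_ceil a)] with s hs u
    rw [hs]
  · filter_upwards [tendsto_pure.1 (tendsto_ceil_right_pure_floor_add_one a)] with s hs u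
    rw [hs, sum_Icc_floor_add_one_left hg]

lemma eventually_sum_Icc_floor_right {b : ℝ} (hg : ∀ k : ℤ, (k : ℝ) = b → g k = 0) :
    ∀ᶠ t in 𝓝 b, ∀ c : ℤ, ∑ k ∈ Icc c ⌊t⌋, g k = ∑ k ∈ Icc c ⌊b⌋, g k := by
  rw [← nhdsLT_sup_nhdsGE, eventually_sup]
  constructor
  · filter_upwards [tendsto_pure.1 (tendsto_floor_left_pure_ceil_sub_one b)] with t ht c
    rw [ht, sum_Icc_ceil_sub_one_right hg]
  · filter_upwards [tendsto_pure.1 (tendsto_floor_right_pure_floor b)] with t ht c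
    rw [ht]

end IccSums

lemma Nonsingular.cc_eq_zero {Λ : ℝ} {q : ℕ} {x : ℝ} (hns : Nonsingular Λ q x) (a : ℤ) {j : ℤ}
    (hj : (j : ℝ) = x * q - q / (2 * Λ) ∨ (j : ℝ) = x * q + q / (2 * Λ)) :
    cc a q j = 0 := by
  rcases Nat.even_or_odd q with ⟨m, hm⟩ | hodd
  · have hmz : (q : ℤ) / 2 = m := by omega
    have hmr : (q : ℝ) / 2 = m := by rw [hm]; push_cast; ring
    have hpar : ¬ Even (j + (q : ℤ) / 2) := fun hpar => by
      have := hns.2 ⟨m, hm⟩ _ hpar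
      rcases hj with hj | hj
      · exact this.1 (by rw [← hj, hmr, hmz]; push_cast; ring)
      · exact this.2 (by rw [← hj, hmr, hmz]; push_cast; ring)
    simp [cc, Nat.not_odd_iff_even.2 ⟨m, hm⟩, hpar]
  · exact absurd hj (by simpa [eq_comm] using hns.1 hodd j)

lemma eventually_sum_Iset_eq {Λ : ℝ} {q : ℕ} {x : ℝ} (hns : Nonsingular Λ q x) (a : ℤ)
    (f : ℤ → ℂ) :
    ∀ᶠ y in 𝓝 x, ∑ k ∈ Iset Λ q y, cc a q k * f k = ∑ k ∈ Iset Λ q x, cc a q k * f k := by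
  have hzero : ∀ j : ℤ, ((j : ℝ) = x * q - q / (2 * Λ) ∨ (j : ℝ) = x * q + q / (2 * Λ)) →
      cc a q j * f j = 0 := fun j hj => by rw [hns.cc_eq_zero a hj, zero_mul]
  have hleft := ((Continuous.tendsto (by fun_prop) x).eventually
    (eventually_sum_Icc_ceil_left fun j hj => hzero j (Or.inl hj)) :
      ∀ᶠ y in 𝓝 x, ∀ u : ℤ, ∑ k ∈ Icc ⌈y * q - q / (2 * Λ)⌉ u, cc a q k * f k = _)
  have hright := ((Continuous.tendsto (by fun_prop) x).eventually
    (eventually_sum_Icc_floor_right fun j hj => hzero j (Or.inr hj)) :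
      ∀ᶠ y in 𝓝 x, ∀ c : ℤ, ∑ k ∈ Icc c ⌊y * q + q / (2 * Λ)⌋, cc a q k * f k = _)
  filter_upwards [hleft, hright] with y hl hr
  rw [Iset, Iset, hl, hr]

lemma pden_eq_norm_Sminus_Splus_sq (N q : ℕ) (Λ : ℝ) (a : ℤ) (y : ℝ) :
    pden N q Λ a y =
      (Λ / q) * ‖Sminus N q Λ a y * e (2 * N * Λ * y) - Splus N q Λ a y‖ ^ 2 := by
  have hsum : ∑ k ∈ Iset Λ q y, cc a q k * (Real.sin (2 * Real.pi * N * Λ * (y - k / q)) : ℂ)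
      = e (-(N * Λ * y)) * (Sminus N q Λ a y * e (2 * N * Λ * y) - Splus N q Λ a y)
        / (2 * Complex.I) := by
    rw [Sminus, Splus, sum_mul, ← sum_sub_distrib, mul_sum, sum_div]
    refine sum_congr rfl fun k _ => ?_
    have hplus : e (N * Λ * y - N * Λ * k / q)
        = e (-(N * Λ * y)) * (e (-(N * Λ * k / q)) * e (2 * N * Λ * y)) := by
      rw [← e_add, ← e_add]; congr 1; ring
    have hminus : e (-(N * Λ * y - N * Λ * k / q)) = e (-(N * Λ * y)) * e (N * Λ * k / q) := by
      rw [← e_add]; congr 1; ring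
    rw [show 2 * Real.pi * N * Λ * (y - k / q) = 2 * Real.pi * (N * Λ * y - N * Λ * k / q) by ring,
      ofReal_sin_two_pi_mul, hplus, hminus]
    ring
  rw [pden, hsum, norm_div, norm_mul, norm_e, norm_mul, Complex.norm_two, Complex.norm_I]
  ring

theorem stmt6_general (Λ : ℝ) (N : ℕ) (a : ℤ) (q : ℕ) (x : ℝ)
    (hns : Nonsingular Λ q x) :
    ∃ l u : ℝ, l < x ∧ x < u ∧ ∀ y ∈ Set.Ioo l u,
      pden N q Λ a y =
        (Λ / q) * (Norm.norm (Sminus N q Λ a x * e (2 * N * Λ * y) - Splus N q Λ a x)) ^ 2 := by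
  have hS : ∀ᶠ y in 𝓝 x, Sminus N q Λ a y = Sminus N q Λ a x ∧ Splus N q Λ a y = Splus N q Λ a x :=
    (eventually_sum_Iset_eq hns a _).and (eventually_sum_Iset_eq hns a _)
  obtain ⟨l, u, hx, hsub⟩ := mem_nhds_iff_exists_Ioo_subset.1 hS
  refine ⟨l, u, hx.1, hx.2, fun y hy => ?_⟩
  obtain ⟨hminus, hplus⟩ := hsub hy
  rw [pden_eq_norm_Sminus_Splus_sq, hminus, hplus]

theorem stmt6 (Λ : ℝ) (hΛ : 1 < Λ) (N : ℕ) (hN : 0 < N) (a : ℤ) (q : ℕ)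
    (hq : 0 < q) (hcop : Int.gcd a q = 1) (x : ℝ) (hx : x ∈ Set.Ioo (0 : ℝ) (1 / 2))
    (hns : Nonsingular Λ q x) :
    ∃ l u : ℝ, l < x ∧ x < u ∧ ∀ y ∈ Set.Ioo l u,
      pden N q Λ a y =
        (Λ / q) * (Norm.norm (Sminus N q Λ a x * e (2 * N * Λ * y) - Splus N q Λ a x)) ^ 2 :=
  stmt6_general Λ N a q x hns
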